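/- Let G be a finite non-cyclic group. Then the graph co-P_E(G*) has a dominating vertex (a vertex adjacent to all other vertices of co-P_E(G*)) if and only if G has a maximal cyclic subgroup of order 2. -/

import Mathlib

/-!
A generator `x` of a maximal cyclic subgroup is isolated in `coPE G` only if `G = ⟨x⟩`, since
every element sharing a cyclic subgroup with `x` lies in `⟨x⟩`. If `v` dominates `coPE(G*)`,
choose a maximal cyclic `⟨z⟩ ∋ v`; every generator of `⟨z⟩` is a vertex of `coPE(G*)` not
adjacent to `v`, so it equals `v`. Hence `v = v⁻¹ ≠ 1` and `⟨v⟩` is maximal cyclic of order 2.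
Conversely, a generator `g` of a maximal cyclic subgroup of order 2 is adjacent to every
vertex `w ≠ g` of `coPE(G*)`, since a cyclic subgroup containing both is `⟨g⟩ = {1, g}`
and `1` is isolated.
-/

/-- A subgroup `M` of `G` is a maximal cyclic subgroup if it is cyclic and is not properly
contained in any cyclic subgroup of `G` other than itself. -/
def IsMaximalCyclic {G : Type*} [Group G] (M : Subgroup G) : Prop :=
  (∃ g : G, M = Subgroup.zpowers g) ∧
    ∀ K : Subgroup G, (∃ g : G, K = Subgroup.zpowers g) → M ≤ K → M = K

/-- The complement of the enhanced power graph of a group `G`: distinct `x, y` are adjacent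
iff no cyclic subgroup of `G` contains both. -/
def coPE (G : Type*) [Group G] : SimpleGraph G where
  Adj x y := x ≠ y ∧ ¬∃ z : G, x ∈ Subgroup.zpowers z ∧ y ∈ Subgroup.zpowers z
  symm := by
    refine ⟨?_⟩
    rintro x y ⟨h1, h2⟩
    exact ⟨h1.symm, fun ⟨z, hz⟩ => h2 ⟨z, hz.2, hz.1⟩⟩
  loopless := by refine ⟨?_⟩; rintro x ⟨h, -⟩; exact h rfl

/-- The set of non-isolated vertices of `coPE G`. -/
def nonIsolated (G : Type*) [Group G] : Set G := {x | ∃ y, (coPE G).Adj x y}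

/-- The subgraph of `coPE G` induced by its non-isolated vertices. -/
def coPEstar (G : Type*) [Group G] : SimpleGraph (nonIsolated G) :=
  (coPE G).induce (nonIsolated G)

open Subgroup

section

variable {G : Type*} [Group G]

lemma isMaximalCyclic_iff_maximal {M : Subgroup G} :
    IsMaximalCyclic M ↔ Maximal (fun K : Subgroup G => ∃ g, K = zpowers g) M :=
  and_congr_right fun _ =>
    forall₂_congr fun _ _ => imp_congr_right fun hle => ⟨Eq.ge, hle.antisymm⟩

lemma exists_mem_zpowers_isMaximalCyclic [Finite G] (x : G) :
    ∃ z : G, x ∈ zpowers z ∧ IsMaximalCyclic (zpowers z) := by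
  obtain ⟨M, hle, hM⟩ :=
    Finite.exists_le_maximal (p := fun K : Subgroup G => ∃ g, K = zpowers g) ⟨x, rfl⟩
  obtain ⟨z, rfl⟩ := hM.prop
  exact ⟨z, zpowers_le.mp hle, isMaximalCyclic_iff_maximal.mpr hM⟩

lemma IsMaximalCyclic.zpowers_eq_of_mem {x u : G} (hx : IsMaximalCyclic (zpowers x))
    (hxu : x ∈ zpowers u) : zpowers x = zpowers u :=
  hx.2 _ ⟨u, rfl⟩ (zpowers_le.mpr hxu)

lemma one_notMem_nonIsolated : (1 : G) ∉ nonIsolated G := by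
  rintro ⟨y, -, hy⟩
  exact hy ⟨y, one_mem _, mem_zpowers y⟩

lemma mem_nonIsolated_of_isMaximalCyclic (hG : ¬IsCyclic G) {x : G}
    (hx : IsMaximalCyclic (zpowers x)) : x ∈ nonIsolated G := by
  by_contra hiso
  refine hG ⟨x, fun y => show y ∈ zpowers x from ?_⟩
  by_cases hxy : x = y
  · exact hxy ▸ mem_zpowers x
  · have hshare : ∃ z, x ∈ zpowers z ∧ y ∈ zpowers z := by
      by_contra h
      exact hiso ⟨y, hxy, h⟩
    obtain ⟨z, hxz, hyz⟩ := hshare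
    rwa [hx.zpowers_eq_of_mem hxz]

lemma eq_one_or_eq_of_mem_zpowers_of_orderOf_eq_two {g y : G} (hg : orderOf g = 2)
    (hy : y ∈ zpowers g) : y = 1 ∨ y = g := by
  classical
  have hfin : IsOfFinOrder g := orderOf_pos_iff.mp (hg ▸ two_pos)
  rw [hfin.mem_zpowers_iff_mem_range_orderOf, hg] at hy
  simpa [Finset.range_add_one, or_comm] using hy

lemma coPE_adj_of_isMaximalCyclic_of_orderOf_eq_two {g w : G}
    (hg : IsMaximalCyclic (zpowers g)) (hord : orderOf g = 2) (hw : w ∈ nonIsolated G)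
    (hwg : w ≠ g) : (coPE G).Adj g w := by
  refine ⟨hwg.symm, ?_⟩
  rintro ⟨u, hgu, hwu⟩
  rw [← hg.zpowers_eq_of_mem hgu] at hwu
  rcases eq_one_or_eq_of_mem_zpowers_of_orderOf_eq_two hord hwu with rfl | rfl
  · exact one_notMem_nonIsolated hw
  · exact hwg rfl

lemma isMaximalCyclic_zpowers_and_orderOf_eq_two_of_forall_coPE_adj [Finite G]
    (hG : ¬IsCyclic G) {x : G} (hx : x ∈ nonIsolated G)
    (hdom : ∀ w ∈ nonIsolated G, w ≠ x → (coPE G).Adj x w) :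
    IsMaximalCyclic (zpowers x) ∧ orderOf x = 2 := by
  obtain ⟨z, hxz, hz⟩ := exists_mem_zpowers_isMaximalCyclic x
  have generator_eq : ∀ g, zpowers g = zpowers z → g = x := by
    intro g hg
    by_contra hgx
    have hgmax : IsMaximalCyclic (zpowers g) := hg ▸ hz
    exact (hdom g (mem_nonIsolated_of_isMaximalCyclic hG hgmax) hgx).2
      ⟨z, hxz, hg ▸ mem_zpowers g⟩
  obtain rfl := generator_eq z rfl
  refine ⟨hz, orderOf_eq_prime (p := 2) ?_ ?_⟩
  · rw [sq, mul_eq_one_iff_eq_inv, generator_eq _ (zpowers_inv (g := z))]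
  · rintro rfl
    exact one_notMem_nonIsolated hx

end

theorem coPEstar_dominatable_iff {G : Type*} [Group G] [Finite G] (hG : ¬ IsCyclic G) :
    (∃ v : nonIsolated G, ∀ w : nonIsolated G, w ≠ v → (coPEstar G).Adj v w) ↔
      ∃ M : Subgroup G, IsMaximalCyclic M ∧ Nat.card M = 2 := by
  constructor
  · rintro ⟨⟨x, hx⟩, hdom⟩
    obtain ⟨hmax, hord⟩ := isMaximalCyclic_zpowers_and_orderOf_eq_two_of_forall_coPE_adj hG hx
      fun w hw hwx => hdom ⟨w, hw⟩ fun h => hwx (congrArg Subtype.val h)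
    exact ⟨_, hmax, by rw [Nat.card_zpowers, hord]⟩
  · rintro ⟨M, hM, hcard⟩
    obtain ⟨g, rfl⟩ := hM.1
    rw [Nat.card_zpowers] at hcard
    exact ⟨⟨g, mem_nonIsolated_of_isMaximalCyclic hG hM⟩, fun w hwg =>
      coPE_adj_of_isMaximalCyclic_of_orderOf_eq_two hM hcard w.2 fun h => hwg (Subtype.ext h)⟩
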